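/- arXiv:2601.15800 — 14 statements merged into one kernel-verified Lean document; each statement's English description precedes it below -/
import Mathlib

section
/- Let G be a finite group and O a G-transfer system. Then there exists a unique minimal subgroup M of G with M →_O G; that is, M →_O G and for every subgroup H with H →_O G one has M ≤ H. This M is called the minimal fibrant subgroup of O. -/
/-- A `G`-transfer system: a partial order `rel` on the set of subgroups of `G`
refining inclusion, closed under restriction and conjugation. -/
structure TransferSystem (G : Type*) [Group G] where
  rel : Subgroup G → Subgroup G → Prop
  refl : ∀ H : Subgroup G, rel H H
  trans : ∀ {K L H : Subgroup G}, rel K L → rel L H → rel K H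
  le_of_rel : ∀ {K H : Subgroup G}, rel K H → K ≤ H
  restrict : ∀ {L H K : Subgroup G}, rel L H → K ≤ H → rel (K ⊓ L) K
  conj : ∀ {K H : Subgroup G} (g : G), rel K H →
    rel (K.map (MulAut.conj g).toMonoidHom) (H.map (MulAut.conj g).toMonoidHom)

/-- A transfer system is saturated if whenever `L ≤ K ≤ H` and `L → H`, also `K → H`. -/
def TransferSystem.IsSaturated {G : Type*} [Group G] (O : TransferSystem G) : Prop :=
  ∀ L K H : Subgroup G, L ≤ K → K ≤ H → O.rel L H → O.rel K H

/-- A transfer system is disc-like (cosaturated) if it is generated by its transfers with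
target `G`, i.e. it is the smallest transfer system containing `{(H, ⊤) : H →_O ⊤}`. -/
def TransferSystem.IsDiscLike {G : Type*} [Group G] (O : TransferSystem G) : Prop :=
  ∀ O' : TransferSystem G, (∀ H : Subgroup G, O.rel H ⊤ → O'.rel H ⊤) →
    ∀ K H : Subgroup G, O.rel K H → O'.rel K H

/-- The normal core `Core_H(K) = ⋂_{h ∈ H} h K h⁻¹` of `K` in `H`. -/
def normalCoreIn {G : Type*} [Group G] (H K : Subgroup G) : Subgroup G :=
  ⨅ h ∈ H, K.map (MulAut.conj h).toMonoidHom

/-- The inflation relation on subgroups of `G` associated to a `(G/N)`-transfer system `Q`: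
`M → L` iff there are `N ≤ K ≤ H` with `L ≤ H`, `M = K ⊓ L` and `K/N →_Q H/N`. -/
def infRel {G : Type*} [Group G] (N : Subgroup G) [N.Normal] (Q : TransferSystem (G ⧸ N)) :
    Subgroup G → Subgroup G → Prop :=
  fun M L => ∃ K H : Subgroup G, N ≤ K ∧ K ≤ H ∧ L ≤ H ∧ M = K ⊓ L ∧
    Q.rel (K.map (QuotientGroup.mk' N)) (H.map (QuotientGroup.mk' N))

/-- Every transfer system over a finite group has a unique minimal fibrant
subgroup `M`, i.e. `M →_O G` and `M ≤ H` for every `H` with `H →_O G`. -/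
theorem stmt1 {G : Type*} [Group G] [Finite G] (O : TransferSystem G) :
    ∃! M : Subgroup G, O.rel M ⊤ ∧ ∀ H : Subgroup G, O.rel H ⊤ → M ≤ H := by
  have hwf : WellFoundedLT (Subgroup G) := inferInstance
  obtain ⟨M, hM, hmin⟩ := hwf.wf.has_min {H | O.rel H ⊤} ⟨⊤, O.refl ⊤⟩
  have key : ∀ H : Subgroup G, O.rel H ⊤ → M ≤ H := by
    intro H hH
    have h1 : O.rel (M ⊓ H) M := O.restrict hH le_top
    have h2 : O.rel (M ⊓ H) ⊤ := O.trans h1 hM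
    have h3 := hmin _ h2
    have : M ⊓ H = M := by
      rcases lt_or_eq_of_le (inf_le_left : M ⊓ H ≤ M) with h | h
      · exact absurd h h3
      · exact h
    exact this ▸ inf_le_right
  exact ⟨M, ⟨hM, key⟩, fun M' ⟨hM', key'⟩ => le_antisymm (key' M hM) (key M' hM')⟩
end

section
/- Let G be a finite group and O a G-transfer system with minimal fibrant subgroup M (i.e., M →_O G and M ≤ H for every subgroup H with H →_O G). Then M is a normal subgroup of G. -/
/-- The minimal fibrant subgroup of a transfer system is normal. -/
theorem stmt2 {G : Type*} [Group G] [Finite G] (O : TransferSystem G) (M : Subgroup G)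
    (hM : O.rel M ⊤) (hmin : ∀ H : Subgroup G, O.rel H ⊤ → M ≤ H) :
    M.Normal := by
  constructor
  intro x hx g
  have hc := O.conj g⁻¹ hM
  rw [show (⊤ : Subgroup G).map (MulAut.conj g⁻¹).toMonoidHom = ⊤ from
    Subgroup.map_top_of_surjective _ (MulAut.conj g⁻¹).surjective] at hc
  obtain ⟨y, hy, hyx⟩ := hmin _ hc hx
  have : y = g * x * g⁻¹ := by
    have : g⁻¹ * y * g⁻¹⁻¹ = x := hyx
    group at this ⊢
    rw [← this]; group
  rwa [← this]
end

section
/- Let G be a finite group and O a disc-like G-transfer system. Then for all subgroups L ≤ K of G with L →_O K, there exists a subgroup H' of G such that H' →_O G and H' ∩ K = L. Consequently, O is obtained by closing the set of transfers S = {H → G : H →_O G} under restriction. -/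
/-- In a disc-like transfer system, every transfer `L →_O K` is the
restriction of a transfer with target `G`: there is `H'` with `H' →_O G` and `H' ⊓ K = L`. -/
theorem stmt4 {G : Type*} [Group G] [Finite G] (O : TransferSystem G)
    (hO : O.IsDiscLike) (L K : Subgroup G) (h : O.rel L K) :
    ∃ H' : Subgroup G, O.rel H' ⊤ ∧ H' ⊓ K = L := by
  let O' : TransferSystem G :=
    { rel := fun M L => ∃ H' : Subgroup G, O.rel H' ⊤ ∧ H' ⊓ L = M
      refl := fun H => ⟨⊤, O.refl ⊤, top_inf_eq H⟩
      trans := by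
        rintro K L H ⟨H1, h1, rfl⟩ ⟨H2, h2, rfl⟩
        refine ⟨H1 ⊓ H2, O.trans (by simpa using O.restrict h2 (le_top (a := H1))) h1, ?_⟩
        rw [inf_assoc]
      le_of_rel := by rintro K H ⟨H', -, rfl⟩; exact inf_le_right
      restrict := by
        rintro L H K ⟨H', h', rfl⟩ hK
        refine ⟨H', h', ?_⟩
        rw [← inf_assoc, inf_comm K H', inf_assoc, inf_of_le_left hK]
      conj := by
        rintro K H g ⟨H', h', rfl⟩
        refine ⟨H'.map (MulAut.conj g).toMonoidHom, ?_, ?_⟩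
        · have := O.conj g h'
          rwa [Subgroup.map_top_of_surjective _ (MulAut.conj g).surjective] at this
        · rw [← Subgroup.map_inf _ _ _ (MulAut.conj g).injective] }
  have key : ∀ K H : Subgroup G, O.rel K H → O'.rel K H :=
    hO O' (fun H hH => ⟨H, hH, inf_top_eq H⟩)
  exact key L K h
end

section
/- Let G be a finite group, O any G-transfer system, and K ≤ H subgroups of G. If K →_O H, then Core_H(K) →_O H, where Core_H(K) = ⋂_{h ∈ H} hKh⁻¹ is the normal core of K in H. -/
lemma map_conj_self {G : Type*} [Group G] (H : Subgroup G) {h : G} (hh : h ∈ H) :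
    H.map (MulAut.conj h).toMonoidHom = H := by
  ext x
  simp only [Subgroup.mem_map, MulEquiv.coe_toMonoidHom, MulAut.conj_apply]
  constructor
  · rintro ⟨y, hy, rfl⟩; exact H.mul_mem (H.mul_mem hh hy) (H.inv_mem hh)
  · intro hx
    exact ⟨h⁻¹ * x * h, H.mul_mem (H.mul_mem (H.inv_mem hh) hx) hh, by group⟩

/-- For any transfer system, `K →_O H` implies `Core_H(K) →_O H`. -/
theorem stmt5 {G : Type*} [Group G] [Finite G] (O : TransferSystem G)
    (K H : Subgroup G) (hKH : K ≤ H) (h : O.rel K H) :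
    O.rel (normalCoreIn H K) H := by
  set C := normalCoreIn H K with hCdef
  have hCle : ∀ {g : G}, g ∈ H → C ≤ K.map (MulAut.conj g).toMonoidHom := by
    intro g hg
    exact iInf₂_le g hg
  have hCK : C ≤ K := by
    have h1 : K.map (MulAut.conj (1 : G)).toMonoidHom = K := by ext x; simp
    have := hCle H.one_mem
    rwa [h1] at this
  have hwf : WellFounded ((· < ·) : Subgroup G → Subgroup G → Prop) := wellFounded_lt
  have hne : {L : Subgroup G | C ≤ L ∧ L ≤ K ∧ O.rel L H}.Nonempty :=
    ⟨K, hCK, le_rfl, h⟩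
  obtain ⟨L, ⟨hCL, hLK, hLH⟩, hmin⟩ := hwf.has_min _ hne
  have hLleH : L ≤ H := hLK.trans hKH
  have hLC : L ≤ C := by
    by_contra hnot
    rw [hCdef, normalCoreIn, le_iInf₂_iff] at hnot
    push_neg at hnot
    obtain ⟨g, hg, hLg⟩ := hnot
    have hrelg := O.conj g h
    rw [map_conj_self H hg] at hrelg
    have hrel1 : O.rel (L ⊓ K.map (MulAut.conj g).toMonoidHom) L :=
      O.restrict hrelg hLleH
    have hrel2 : O.rel (L ⊓ K.map (MulAut.conj g).toMonoidHom) H :=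
      O.trans hrel1 hLH
    refine hmin (L ⊓ K.map (MulAut.conj g).toMonoidHom)
      ⟨le_inf hCL (hCle hg), inf_le_left.trans hLK, hrel2⟩ ?_
    exact lt_of_le_of_ne inf_le_left (fun heq => hLg (heq ▸ inf_le_right))
  have : L = C := le_antisymm hLC hCL
  exact this ▸ hLH
end

section
/- Let G be a finite group, O a saturated G-transfer system, and K ≤ H subgroups of G. Then K →_O H if and only if Core_H(K) →_O H, where Core_H(K) = ⋂_{h ∈ H} hKh⁻¹ is the normal core of K in H. -/
/-!
Conjugating `K → H` by `h ∈ H` fixes `H`, so every conjugate `hKh⁻¹` transfers to `H`.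
Transfers to a fixed `H` are closed under meets (restrict one along the other, then compose),
so the finite meet `Core_H(K)` transfers to `H`. Conversely `Core_H(K) ≤ K ≤ H`, and
saturation lifts `Core_H(K) → H` to `K → H`.
-/

lemma Subgroup.map_conj_eq_self_of_mem {G : Type*} [Group G] {H : Subgroup G} {h : G}
    (hh : h ∈ H) : H.map (MulAut.conj h).toMonoidHom = H :=
  mem_normalizer_iff_map_conj_eq.mp (le_normalizer hh)

lemma normalCoreIn_le {G : Type*} [Group G] (H K : Subgroup G) : normalCoreIn H K ≤ K :=
  (biInf_le _ H.one_mem).trans_eq (Subgroup.map_conj_eq_self_of_mem K.one_mem)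

namespace TransferSystem

variable {G : Type*} [Group G] (O : TransferSystem G)

lemma rel_inf {A B H : Subgroup G} (hA : O.rel A H) (hB : O.rel B H) : O.rel (A ⊓ B) H :=
  O.trans (O.restrict hB (O.le_of_rel hA)) hA

lemma infClosed_setOf_rel (H : Subgroup G) : InfClosed {L | O.rel L H} :=
  fun _ hA _ hB => O.rel_inf hA hB

lemma rel_map_conj_of_mem {K H : Subgroup G} (hKH : O.rel K H) {h : G} (hh : h ∈ H) :
    O.rel (K.map (MulAut.conj h).toMonoidHom) H := by
  simpa only [Subgroup.map_conj_eq_self_of_mem hh] using O.conj h hKH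

lemma rel_normalCoreIn {K H : Subgroup G} [Finite H] (hKH : O.rel K H) :
    O.rel (normalCoreIn H K) H :=
  (O.infClosed_setOf_rel H).biInf_mem_of_nonempty (Set.toFinite _)
    ⟨1, H.one_mem⟩ fun _ hh => O.rel_map_conj_of_mem hKH hh

end TransferSystem

/-- For a saturated transfer system and `K ≤ H`,
`K →_O H` if and only if `Core_H(K) →_O H`. -/
theorem stmt6 {G : Type*} [Group G] [Finite G] (O : TransferSystem G)
    (hO : O.IsSaturated) (K H : Subgroup G) (hKH : K ≤ H) :
    O.rel K H ↔ O.rel (normalCoreIn H K) H :=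
  ⟨O.rel_normalCoreIn, hO _ K H (normalCoreIn_le H K) hKH⟩
end

section
/- Let G be a finite abelian group, H a subgroup of G, and P an H-transfer system. Then the relation coind^G_H P on subgroups of G, defined by L →_{coind P} K iff (L ∩ H) →_P (K ∩ H), is a G-transfer system. -/
/-- For abelian `G`, the coinduction `coind^G_H P`, given by
`L → K` iff `L ≤ K` and `(L ⊓ H) →_P (K ⊓ H)`, is a `G`-transfer system. -/
theorem stmt8 {G : Type*} [CommGroup G] [Finite G] (H : Subgroup G)
    (P : TransferSystem ↥H) :
    ∃ T : TransferSystem G, ∀ L K : Subgroup G,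
      T.rel L K ↔ (L ≤ K ∧ P.rel (L.subgroupOf H) (K.subgroupOf H)) := by
  have hconj : ∀ (g : G) (K : Subgroup G), K.map (MulAut.conj g).toMonoidHom = K := by
    intro g K
    ext x
    simp [Subgroup.mem_map, mul_comm]
  refine ⟨⟨fun L K => L ≤ K ∧ P.rel (L.subgroupOf H) (K.subgroupOf H),
    fun K => ⟨le_rfl, P.refl _⟩,
    fun h1 h2 => ⟨h1.1.trans h2.1, P.trans h1.2 h2.2⟩,
    fun h => h.1,
    ?_, ?_⟩, fun _ _ => Iff.rfl⟩
  · intro L H' K h hK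
    refine ⟨inf_le_left, ?_⟩
    have := P.restrict h.2 (Subgroup.comap_mono hK : K.subgroupOf H ≤ H'.subgroupOf H)
    rwa [show (K ⊓ L).subgroupOf H = K.subgroupOf H ⊓ L.subgroupOf H from
      Subgroup.comap_inf .. ]
  · intro K H' g h
    rw [hconj, hconj]
    exact h
end

section
/- Let G be a finite abelian group, H a subgroup of G, P an H-transfer system, and O a G-transfer system. Then O ≤ coind^G_H P if and only if res^G_H O ≤ P. That is, coinduction is right adjoint to restriction. -/
/-- For abelian `G`, coinduction is right adjoint to restriction:
`O ≤ coind^G_H P` iff `res^G_H O ≤ P`. -/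
theorem stmt9 {G : Type*} [CommGroup G] [Finite G] (H : Subgroup G)
    (P : TransferSystem ↥H) (O : TransferSystem G) :
    (∀ L K : Subgroup G, O.rel L K →
        (L ≤ K ∧ P.rel (L.subgroupOf H) (K.subgroupOf H))) ↔
    (∀ L K : Subgroup ↥H, O.rel (L.map H.subtype) (K.map H.subtype) → P.rel L K) := by
  constructor
  · intro h L K hLK
    have := (h _ _ hLK).2
    simpa [Subgroup.subgroupOf, Subgroup.comap_map_eq_self_of_injective H.subtype_injective]
      using this
  · intro h L K hLK
    have hle : L ≤ K := O.le_of_rel hLK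
    refine ⟨hle, ?_⟩
    have h1 : O.rel ((K ⊓ H) ⊓ L) (K ⊓ H) := O.restrict hLK inf_le_left
    have h2 : (K ⊓ H) ⊓ L = L ⊓ H := by
      rw [inf_right_comm, inf_eq_right.mpr hle]
    rw [h2] at h1
    have h3 : (L.subgroupOf H).map H.subtype = L ⊓ H := Subgroup.subgroupOf_map_subtype L H
    have h4 : (K.subgroupOf H).map H.subtype = K ⊓ H := Subgroup.subgroupOf_map_subtype K H
    exact h _ _ (by rw [h3, h4]; exact h1)
end

section
/- Let G be a finite group, N a normal subgroup of G, and Q a saturated (G/N)-transfer system. Then the inflation inf^G_{G/N} Q is a saturated G-transfer system. -/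
open Pointwise




section helpers
variable {G : Type*} [Group G]

/-- Dedekind identity, version 1: if `N ⊴ G` and `N ≤ K` then `K ⊓ (L ⊔ N) = (K ⊓ L) ⊔ N`. -/
lemma myDedekind1 (N K L : Subgroup G) [N.Normal] (hNK : N ≤ K) :
    K ⊓ (L ⊔ N) = (K ⊓ L) ⊔ N := by
  apply le_antisymm
  · rintro x ⟨hxK, hxLN⟩
    have hx : x ∈ ((L : Set G) * (N : Set G)) := by rw [← Subgroup.mul_normal]; exact hxLN
    obtain ⟨l, hl, n, hn, rfl⟩ := hx
    have hlK : l ∈ K := by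
      have : (l * n) * n⁻¹ ∈ K := mul_mem hxK (inv_mem (hNK hn))
      simpa using this
    exact mul_mem (Subgroup.mem_sup_left ⟨hlK, hl⟩) (Subgroup.mem_sup_right hn)
  · exact sup_le (le_inf inf_le_left ((inf_le_right (a := K)).trans le_sup_left))
      (le_inf hNK le_sup_right)

/-- Dedekind identity, version 2: if `N ⊴ G` and `A ≤ C` then `(A ⊔ N) ⊓ C = A ⊔ (N ⊓ C)`. -/
lemma myDedekind2 (N A C : Subgroup G) [N.Normal] (hAC : A ≤ C) :
    (A ⊔ N) ⊓ C = A ⊔ (N ⊓ C) := by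
  apply le_antisymm
  · rintro x ⟨hxAN, hxC⟩
    have hx : x ∈ ((A : Set G) * (N : Set G)) := by rw [← Subgroup.mul_normal]; exact hxAN
    obtain ⟨a, ha, n, hn, rfl⟩ := hx
    have hnC : n ∈ C := by
      have : a⁻¹ * (a * n) ∈ C := mul_mem (inv_mem (hAC ha)) hxC
      simpa using this
    exact mul_mem (Subgroup.mem_sup_left ha) (Subgroup.mem_sup_right ⟨hn, hnC⟩)
  · exact sup_le (le_inf le_sup_left hAC) (le_inf ((inf_le_left).trans le_sup_right) inf_le_right)

/-- Image under the quotient map of an intersection of subgroups containing `N`. -/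
lemma myMapInf (N A B : Subgroup G) [N.Normal] (hB : N ≤ B) :
    (A ⊓ B).map (QuotientGroup.mk' N) =
      A.map (QuotientGroup.mk' N) ⊓ B.map (QuotientGroup.mk' N) := by
  apply le_antisymm
  · exact le_inf (Subgroup.map_mono inf_le_left) (Subgroup.map_mono inf_le_right)
  · rintro x ⟨⟨a, haA, rfl⟩, ⟨b, hbB, hba⟩⟩
    obtain ⟨z, hz, rfl⟩ := (QuotientGroup.mk'_eq_mk' N).mp hba
    exact ⟨b * z, ⟨haA, mul_mem hbB (hB hz)⟩, rfl⟩

lemma myConjN (N : Subgroup G) [hN : N.Normal] (g : G) :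
    N.map (MulAut.conj g).toMonoidHom = N := by
  apply le_antisymm
  · rintro x ⟨n, hn, rfl⟩
    simpa using hN.conj_mem n hn g
  · intro n hn
    exact ⟨g⁻¹ * n * g, by simpa using hN.conj_mem n hn g⁻¹, by simp [mul_assoc]⟩

lemma myConjMap (N : Subgroup G) [N.Normal] (g : G) (A : Subgroup G) :
    (A.map (MulAut.conj g).toMonoidHom).map (QuotientGroup.mk' N) =
      (A.map (QuotientGroup.mk' N)).map
        (MulAut.conj ((QuotientGroup.mk' N) g)).toMonoidHom := by
  rw [Subgroup.map_map, Subgroup.map_map]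
  congr 1

end helpers

section main
variable {G : Type*} [Group G] (N : Subgroup G) [N.Normal] (Q : TransferSystem (G ⧸ N))

/-- Canonical form of the inflation relation. -/
def canonRel : Subgroup G → Subgroup G → Prop :=
  fun M L => M ≤ L ∧ N ⊓ L ≤ M ∧
    Q.rel ((M ⊔ N).map (QuotientGroup.mk' N)) ((L ⊔ N).map (QuotientGroup.mk' N))

lemma canonRel_iff_infRel (M L : Subgroup G) : canonRel N Q M L ↔ infRel N Q M L := by
  constructor
  · rintro ⟨hML, hNL, hq⟩
    refine ⟨M ⊔ N, L ⊔ N, le_sup_right, sup_le_sup_right hML N, le_sup_left, ?_, hq⟩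
    rw [myDedekind2 N M L hML, sup_eq_left.mpr hNL]
  · rintro ⟨K, H, hNK, hKH, hLH, rfl, hq⟩
    have hNH : N ≤ H := hNK.trans hKH
    refine ⟨inf_le_right, le_inf (inf_le_left.trans hNK) inf_le_right, ?_⟩
    have key : (L ⊔ N) ⊓ K = (K ⊓ L) ⊔ N := by
      rw [inf_comm, myDedekind1 N K L hNK]
    have hle : (L ⊔ N).map (QuotientGroup.mk' N) ≤ H.map (QuotientGroup.mk' N) :=
      Subgroup.map_mono (sup_le hLH hNH)
    have := Q.restrict hq hle
    rwa [← myMapInf N (L ⊔ N) K hNK, key] at this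
end main

theorem stmt13 {G : Type*} [Group G] [Finite G] (N : Subgroup G) [N.Normal]
    (Q : TransferSystem (G ⧸ N)) (hQ : Q.IsSaturated) :
    ∃ T : TransferSystem G,
      (∀ M L : Subgroup G, T.rel M L ↔ infRel N Q M L) ∧
      T.IsSaturated := by
  refine ⟨⟨canonRel N Q, ?_, ?_, ?_, ?_, ?_⟩, fun M L => canonRel_iff_infRel N Q M L, ?_⟩
  · -- refl
    exact fun H => ⟨le_rfl, inf_le_right, Q.refl _⟩
  · -- trans
    rintro K L H ⟨hKL, hNL, q1⟩ ⟨hLH, hNH, q2⟩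
    exact ⟨hKL.trans hLH, (le_inf inf_le_left hNH).trans hNL, Q.trans q1 q2⟩
  · -- le_of_rel
    exact fun h => h.1
  · -- restrict
    rintro L H K ⟨hLH, hNH, q⟩ hKH
    refine ⟨inf_le_left, le_inf inf_le_right
      ((le_inf inf_le_left (inf_le_right.trans hKH)).trans hNH), ?_⟩
    have hle : (K ⊔ N).map (QuotientGroup.mk' N) ≤ (H ⊔ N).map (QuotientGroup.mk' N) :=
      Subgroup.map_mono (sup_le_sup_right hKH N)
    have hr := Q.restrict q hle
    have key : (K ⊔ N) ⊓ (L ⊔ N) = (K ⊓ L) ⊔ N := by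
      rw [inf_comm, myDedekind1 N (L ⊔ N) K le_sup_right]
      congr 1
      -- ⊢ (L ⊔ N) ⊓ K = K ⊓ L
      have h1 : (L ⊔ N) ⊓ H = L := by
        rw [myDedekind2 N L H hLH, sup_eq_left.mpr hNH]
      calc (L ⊔ N) ⊓ K = ((L ⊔ N) ⊓ H) ⊓ K := by
            rw [inf_assoc, inf_eq_right.mpr hKH]
        _ = K ⊓ L := by rw [h1, inf_comm]
    rwa [← myMapInf N (K ⊔ N) (L ⊔ N) le_sup_right, key] at hr
  · -- conj
    rintro K H g ⟨hKH, hNH, q⟩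
    refine ⟨Subgroup.map_mono hKH, ?_, ?_⟩
    · have : N ⊓ H.map (MulAut.conj g).toMonoidHom =
          (N ⊓ H).map (MulAut.conj g).toMonoidHom := by
        rw [Subgroup.map_inf _ _ _ (MulAut.conj g).injective, myConjN N]
      rw [this]
      exact Subgroup.map_mono hNH
    · have e1 : K.map (MulAut.conj g).toMonoidHom ⊔ N =
          (K ⊔ N).map (MulAut.conj g).toMonoidHom := by
        rw [Subgroup.map_sup, myConjN N]
      have e2 : H.map (MulAut.conj g).toMonoidHom ⊔ N =
          (H ⊔ N).map (MulAut.conj g).toMonoidHom := by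
        rw [Subgroup.map_sup, myConjN N]
      rw [e1, e2, myConjMap, myConjMap]
      exact Q.conj _ q
  · -- saturated
    rintro L K H hLK hKH ⟨hLH, hNH, q⟩
    exact ⟨hKH, hNH.trans hLK, hQ _ _ _ (Subgroup.map_mono (sup_le_sup_right hLK N))
      (Subgroup.map_mono (sup_le_sup_right hKH N)) q⟩
end

section
/- Let G be a finite group, H a subgroup of G, and O a disc-like G-transfer system. Then the restriction res^G_H O is a disc-like H-transfer system. -/
section Aux

variable {G : Type*} [Group G]

/-- Chain lemma: if `L = K ⊓ (inf of l)` and every element of `l` admits a transfer to `⊤`,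
then `T.rel L K`. -/
private lemma chain_lemma (T : TransferSystem G) :
    ∀ (l : List (Subgroup G)), (∀ B ∈ l, T.rel B ⊤) →
      ∀ K L : Subgroup G, L = K ⊓ l.foldr (· ⊓ ·) ⊤ → T.rel L K := by
  intro l
  induction l with
  | nil => intro _ K L hL; simp at hL; subst hL; exact T.refl _
  | cons B l ih =>
    intro hB K L hL
    have h1 : T.rel (K ⊓ B) K := T.restrict (hB B (by simp)) le_top
    have h2 : T.rel L (K ⊓ B) := by
      apply ih (fun B hBl => hB B (List.mem_cons_of_mem _ hBl)) (K ⊓ B)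
      rw [hL, List.foldr_cons, ← inf_assoc]
    exact T.trans h2 h1

private lemma map_foldr_inf {g : G} (l : List (Subgroup G)) :
    (l.foldr (· ⊓ ·) ⊤).map (MulAut.conj g).toMonoidHom
      = (l.map (Subgroup.map (MulAut.conj g).toMonoidHom)).foldr (· ⊓ ·) ⊤ := by
  induction l with
  | nil =>
    simpa using
      Subgroup.map_top_of_surjective (MulAut.conj g).toMonoidHom (MulAut.conj g).surjective
  | cons B l ih =>
    simp only [List.foldr_cons, List.map_cons,
      Subgroup.map_inf _ _ (MulAut.conj g).toMonoidHom (MulAut.conj g).injective, ih]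

private lemma comap_foldr_inf {H : Subgroup G} (l : List (Subgroup G)) :
    (l.foldr (· ⊓ ·) ⊤).comap H.subtype
      = (l.map (Subgroup.comap H.subtype)).foldr (· ⊓ ·) ⊤ := by
  induction l with
  | nil => simp
  | cons B l ih => simp only [List.foldr_cons, List.map_cons, Subgroup.comap_inf, ih]

/-- The auxiliary `G`-transfer system: `M → N` iff `M = N ⊓ A₁ ⊓ ⋯ ⊓ Aₖ` for
subgroups `Aᵢ` with `O.rel Aᵢ ⊤`. -/
private def genSys (O : TransferSystem G) : TransferSystem G where
  rel M N := M ≤ N ∧ ∃ l : List (Subgroup G), (∀ A ∈ l, O.rel A ⊤) ∧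
    M = N ⊓ l.foldr (· ⊓ ·) ⊤
  refl M := ⟨le_rfl, [], by simp, by simp⟩
  trans := by
    rintro K L M ⟨hKL, l₁, hl₁, rfl⟩ ⟨hLM, l₂, hl₂, hL⟩
    refine ⟨le_trans hKL hLM, l₂ ++ l₁, ?_, ?_⟩
    · intro A hA; rcases List.mem_append.mp hA with h | h
      exacts [hl₂ A h, hl₁ A h]
    · rw [hL]
      have : ∀ (a b : List (Subgroup G)),
          (a ++ b).foldr (· ⊓ ·) (⊤ : Subgroup G)
            = a.foldr (· ⊓ ·) ⊤ ⊓ b.foldr (· ⊓ ·) ⊤ := by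
        intro a b
        induction a with
        | nil => simp
        | cons x a iha => simp [List.foldr_cons, iha, inf_assoc]
      rw [this, ← inf_assoc]
  le_of_rel h := h.1
  restrict := by
    rintro L M K ⟨hLM, l, hl, rfl⟩ hKM
    refine ⟨inf_le_left, l, hl, ?_⟩
    rw [← inf_assoc, inf_eq_left.mpr hKM]
  conj := by
    rintro K M g ⟨hKM, l, hl, rfl⟩
    refine ⟨Subgroup.map_mono hKM, l.map (Subgroup.map (MulAut.conj g).toMonoidHom), ?_, ?_⟩
    · intro A hA
      rcases List.mem_map.mp hA with ⟨B, hB, rfl⟩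
      have := O.conj g (hl B hB)
      rwa [Subgroup.map_top_of_surjective (MulAut.conj g).toMonoidHom (MulAut.conj g).surjective] at this
    · rw [Subgroup.map_inf _ _ (MulAut.conj g).toMonoidHom (MulAut.conj g).injective, map_foldr_inf]

end Aux

/-- The restriction of a disc-like transfer system is a disc-like
`H`-transfer system. -/
theorem stmt14 {G : Type*} [Group G] [Finite G] (H : Subgroup G) (O : TransferSystem G)
    (hO : O.IsDiscLike) :
    ∃ T : TransferSystem ↥H,
      (∀ L K : Subgroup ↥H, T.rel L K ↔ O.rel (L.map H.subtype) (K.map H.subtype)) ∧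
      T.IsDiscLike := by
  have hinj : Function.Injective H.subtype := Subgroup.subtype_injective H
  refine ⟨{ rel := fun L K => O.rel (L.map H.subtype) (K.map H.subtype)
            refl := fun L => O.refl _
            trans := fun h1 h2 => O.trans h1 h2
            le_of_rel := fun h =>
              (Subgroup.map_le_map_iff_of_injective hinj).mp (O.le_of_rel h)
            restrict := by
              intro L K' K h hK
              have := O.restrict h (Subgroup.map_mono hK)
              rwa [← Subgroup.map_inf _ _ _ hinj] at this
            conj := by
              intro L K h hrel
              have hcomp : ∀ M : Subgroup ↥H,
                  (M.map (MulAut.conj h).toMonoidHom).map H.subtype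
                    = (M.map H.subtype).map (MulAut.conj (h : G)).toMonoidHom := by
                intro M
                have hhom : H.subtype.comp (MulAut.conj h).toMonoidHom
                    = ((MulAut.conj (h : G)).toMonoidHom).comp H.subtype := by
                  ext x
                  simp [MulAut.conj_apply]
                rw [Subgroup.map_map, hhom, ← Subgroup.map_map]
              rw [hcomp L, hcomp K]
              exact O.conj (h : G) hrel }, fun L K => Iff.rfl, ?_⟩
  intro T' hgen L K hLK
  obtain ⟨-, l, hl, heq⟩ :=
    hO (genSys O) (fun A hA => ⟨le_top, [A], by simpa using hA, by simp⟩) _ _ hLK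
  apply chain_lemma T' (l.map (Subgroup.comap H.subtype))
  · intro B hB
    rcases List.mem_map.mp hB with ⟨A, hA, rfl⟩
    apply hgen
    show O.rel _ _
    have h1 : (⊤ : Subgroup ↥H).map H.subtype = H := by
      rw [← MonoidHom.range_eq_map, Subgroup.range_subtype]
    rw [h1, Subgroup.map_comap_eq, Subgroup.range_subtype]
    exact O.restrict (hl A hA) le_top
  · have := congrArg (Subgroup.comap H.subtype) heq
    rwa [Subgroup.comap_inf, comap_foldr_inf,
      Subgroup.comap_map_eq_self_of_injective hinj,
      Subgroup.comap_map_eq_self_of_injective hinj] at this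
end

section
/- Let G be a finite group, N a normal subgroup of G, and O a disc-like G-transfer system. Then the N-fixed-points transfer system O^N is a disc-like (G/N)-transfer system. -/
section helpers
variable {G : Type*} [Group G] (N : Subgroup G) [N.Normal]

theorem st15_hconj (g : G) (K' : Subgroup (G ⧸ N)) :
    (K'.map (MulAut.conj (QuotientGroup.mk' N g)).toMonoidHom).comap (QuotientGroup.mk' N)
      = (K'.comap (QuotientGroup.mk' N)).map (MulAut.conj g).toMonoidHom := by
  ext x
  simp only [Subgroup.mem_comap, Subgroup.mem_map, MulAut.conj_apply, MulEquiv.coe_toMonoidHom,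
    QuotientGroup.mk'_apply]
  constructor
  · rintro ⟨y', hy', h⟩
    refine ⟨g⁻¹ * x * g, ?_, by group⟩
    have hx : ((g⁻¹ * x * g : G) : G ⧸ N) = y' := by
      have h' : ((x : G) : G ⧸ N) = ↑g * y' * (↑g)⁻¹ := h.symm
      simp only [QuotientGroup.mk_mul, QuotientGroup.mk_inv]
      rw [h']; group
    rwa [hx]
  · rintro ⟨z, hz, rfl⟩
    exact ⟨(z : G ⧸ N), hz, rfl⟩

theorem st15_hconjmap (g : G) (K : Subgroup G) :
    (K.map (MulAut.conj g).toMonoidHom).map (QuotientGroup.mk' N)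
      = (K.map (QuotientGroup.mk' N)).map (MulAut.conj ((QuotientGroup.mk' N) g)).toMonoidHom := by
  rw [Subgroup.map_map, Subgroup.map_map]
  congr 1

theorem st15_mapmap (g : G) (K : Subgroup G) :
    (K.map (MulAut.conj g).toMonoidHom).map (MulAut.conj g⁻¹).toMonoidHom = K := by
  rw [Subgroup.map_map]
  have h : (MulAut.conj g⁻¹).toMonoidHom.comp (MulAut.conj g).toMonoidHom = MonoidHom.id G := by
    ext x; simp; group
  rw [h, Subgroup.map_id]
end helpers


/-- The `N`-fixed-points of a disc-like transfer system is a disc-like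
`(G/N)`-transfer system. -/
theorem stmt15 {G : Type*} [Group G] [Finite G] (N : Subgroup G) [N.Normal]
    (O : TransferSystem G) (hO : O.IsDiscLike) :
    ∃ T : TransferSystem (G ⧸ N),
      (∀ K' H' : Subgroup (G ⧸ N), T.rel K' H' ↔
        O.rel (K'.comap (QuotientGroup.mk' N)) (H'.comap (QuotientGroup.mk' N))) ∧
      T.IsDiscLike := by
  set q := QuotientGroup.mk' N with hqdef
  have hqs : Function.Surjective q := QuotientGroup.mk'_surjective N
  have hker : q.ker = N := QuotientGroup.ker_mk' N
  have hcq : ∀ K : Subgroup G, N ≤ K → (K.map q).comap q = K := by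
    intro K hK
    rw [Subgroup.comap_map_eq, hker, sup_of_le_left hK]
  have hqc : ∀ K' : Subgroup (G ⧸ N), (K'.comap q).map q = K' :=
    fun K' => Subgroup.map_comap_eq_self_of_surjective hqs K'
  have hNle : ∀ K' : Subgroup (G ⧸ N), N ≤ K'.comap q := by
    intro K' n hn
    have h1 : q n = 1 := by rwa [← MonoidHom.mem_ker, hker]
    simpa [Subgroup.mem_comap, h1] using K'.one_mem
  have hqtop : (⊤ : Subgroup G).map q = ⊤ := Subgroup.map_top_of_surjective q hqs
  have hqinf : ∀ K L : Subgroup G, N ≤ K → N ≤ L →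
      (K ⊓ L).map q = K.map q ⊓ L.map q := by
    intro K L hK hL
    conv_rhs => rw [← hqc (K.map q ⊓ L.map q)]
    rw [Subgroup.comap_inf, hcq K hK, hcq L hL]
  -- the fixed-points transfer system
  refine ⟨{ rel := fun K' H' => O.rel (K'.comap q) (H'.comap q)
            refl := fun H' => O.refl _
            trans := fun h1 h2 => O.trans h1 h2
            le_of_rel := by
              intro K' H' h
              have := Subgroup.map_mono (f := q) (O.le_of_rel h)
              rwa [hqc, hqc] at this
            restrict := by
              intro L' H' K' h hle
              show O.rel ((K' ⊓ L').comap q) (K'.comap q)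
              rw [Subgroup.comap_inf]
              exact O.restrict h (Subgroup.comap_mono hle)
            conj := by
              intro K' H' g' h
              obtain ⟨g, rfl⟩ := hqs g'
              show O.rel _ _
              rw [st15_hconj N g K', st15_hconj N g H']
              exact O.conj g h }, fun _ _ => Iff.rfl, ?_⟩
  -- disc-likeness
  intro T' hT' K' H' hKH'
  have hNconj : ∀ (g : G) (K : Subgroup G), N ≤ K →
      N ≤ K.map (MulAut.conj g).toMonoidHom := by
    intro g K hK n hn
    refine ⟨g⁻¹ * n * g, hK ?_, by simp [MulAut.conj_apply]; group⟩
    simpa using (inferInstance : N.Normal).conj_mem n hn g⁻¹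
  let O' : TransferSystem G :=
  { rel := fun K H => O.rel K H ∧ (N ≤ K → T'.rel (K.map q) (H.map q))
    refl := fun H => ⟨O.refl H, fun _ => T'.refl _⟩
    trans := by
      rintro K L H ⟨h1, h1'⟩ ⟨h2, h2'⟩
      exact ⟨O.trans h1 h2, fun hN => T'.trans (h1' hN) (h2' (hN.trans (O.le_of_rel h1)))⟩
    le_of_rel := fun h => O.le_of_rel h.1
    restrict := by
      rintro L H K ⟨h1, h1'⟩ hKH
      refine ⟨O.restrict h1 hKH, fun hN => ?_⟩
      have hNK : N ≤ K := hN.trans inf_le_left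
      have hNL : N ≤ L := hN.trans inf_le_right
      rw [hqinf K L hNK hNL]
      exact T'.restrict (h1' hNL) (Subgroup.map_mono hKH)
    conj := by
      rintro K H g ⟨h1, h1'⟩
      refine ⟨O.conj g h1, fun hN => ?_⟩
      have hNK : N ≤ K := by
        have := hNconj g⁻¹ _ hN
        rwa [st15_mapmap g K] at this
      rw [st15_hconjmap N g K, st15_hconjmap N g H]
      exact T'.conj (q g) (h1' hNK) }
  have key := hO O' (fun H hH => ⟨hH, fun hN => by
    have hT : T'.rel (H.map q) (⊤ : Subgroup (G ⧸ N)) := by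
      apply hT' (H.map q)
      show O.rel ((H.map q).comap q) ((⊤ : Subgroup (G ⧸ N)).comap q)
      rwa [hcq H hN, Subgroup.comap_top]
    rwa [hqtop]⟩)
  have h2 := (key _ _ hKH').2 (hNle K')
  rwa [hqc, hqc] at h2
end

section
/- Let G be a finite group, N a normal subgroup of G, and Q a disc-like (G/N)-transfer system. Then the inflation inf^G_{G/N} Q is a disc-like G-transfer system. -/
namespace Stmt16Aux

variable {G : Type*} [Group G] (N : Subgroup G) [N.Normal]

lemma ker_le_comap (S : Subgroup (G ⧸ N)) : N ≤ S.comap (QuotientGroup.mk' N) := by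
  intro n hn
  have h1 : (QuotientGroup.mk' N) n = 1 := (QuotientGroup.eq_one_iff n).mpr hn
  exact Subgroup.mem_comap.mpr (h1 ▸ S.one_mem)

lemma comap_map_self {K : Subgroup G} (hK : N ≤ K) :
    (K.map (QuotientGroup.mk' N)).comap (QuotientGroup.mk' N) = K := by
  rw [Subgroup.comap_map_eq, QuotientGroup.ker_mk', sup_eq_left.mpr hK]

lemma map_comap_self (S : Subgroup (G ⧸ N)) :
    (S.comap (QuotientGroup.mk' N)).map (QuotientGroup.mk' N) = S :=
  Subgroup.map_comap_eq_self_of_surjective (QuotientGroup.mk'_surjective N) S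

lemma map_inf_of_le {K L : Subgroup G} (hK : N ≤ K) :
    (K ⊓ L).map (QuotientGroup.mk' N) =
      K.map (QuotientGroup.mk' N) ⊓ L.map (QuotientGroup.mk' N) := by
  refine le_antisymm (le_inf (Subgroup.map_mono inf_le_left) (Subgroup.map_mono inf_le_right)) ?_
  rintro y ⟨hy1, hy2⟩
  obtain ⟨k, hk, hky⟩ := Subgroup.mem_map.mp hy1
  obtain ⟨l, hl, hly⟩ := Subgroup.mem_map.mp hy2
  have hkl : k * l⁻¹ ∈ N := by
    have : (QuotientGroup.mk' N) (k * l⁻¹) = 1 := by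
      rw [map_mul, map_inv, hky, hly, mul_inv_cancel]
    exact (QuotientGroup.eq_one_iff _).mp this
  have hlK : l ∈ K := by
    have : l = (k * l⁻¹)⁻¹ * k := by group
    rw [this]; exact K.mul_mem (K.inv_mem (hK hkl)) hk
  exact Subgroup.mem_map.mpr ⟨l, ⟨hlK, hl⟩, hly⟩

lemma map_conj_map (g : G) (K : Subgroup G) :
    (K.map (MulAut.conj g).toMonoidHom).map (QuotientGroup.mk' N) =
      (K.map (QuotientGroup.mk' N)).map
        (MulAut.conj ((QuotientGroup.mk' N) g)).toMonoidHom := by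
  have h : (QuotientGroup.mk' N).comp (MulAut.conj g).toMonoidHom =
      ((MulAut.conj ((QuotientGroup.mk' N) g)).toMonoidHom).comp (QuotientGroup.mk' N) := by
    ext x; simp
  rw [Subgroup.map_map, Subgroup.map_map, h]

lemma map_conj_self (g : G) : N.map (MulAut.conj g).toMonoidHom = N := by
  ext x
  rw [Subgroup.mem_map_equiv]
  constructor
  · intro h
    have := ‹N.Normal›.conj_mem _ h g
    simpa [mul_assoc] using this
  · intro h
    simpa [mul_assoc] using ‹N.Normal›.conj_mem _ h g⁻¹

lemma comap_conj (g : G) (A : Subgroup (G ⧸ N)) :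
    (A.map (MulAut.conj ((QuotientGroup.mk' N) g)).toMonoidHom).comap (QuotientGroup.mk' N) =
      (A.comap (QuotientGroup.mk' N)).map (MulAut.conj g).toMonoidHom := by
  ext x
  rw [Subgroup.mem_comap, Subgroup.mem_map_equiv, Subgroup.mem_map_equiv, Subgroup.mem_comap]
  simp

/-- Canonical form of the inflation relation. -/
lemma infRel_iff (Q : TransferSystem (G ⧸ N)) (M L : Subgroup G) :
    infRel N Q M L ↔ M ≤ L ∧
      M = (M.map (QuotientGroup.mk' N)).comap (QuotientGroup.mk' N) ⊓ L ∧
      Q.rel (M.map (QuotientGroup.mk' N)) (L.map (QuotientGroup.mk' N)) := by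
  constructor
  · rintro ⟨K, H, hNK, hKH, hLH, hM, hQrel⟩
    have hML : M ≤ L := hM ▸ inf_le_right
    have hMK : M ≤ K := hM ▸ inf_le_left
    have hcm : (M.map (QuotientGroup.mk' N)).comap (QuotientGroup.mk' N) = M ⊔ N := by
      rw [Subgroup.comap_map_eq, QuotientGroup.ker_mk']
    refine ⟨hML, ?_, ?_⟩
    · refine le_antisymm (le_inf (Subgroup.le_comap_map (QuotientGroup.mk' N) M) hML) ?_
      have hle : (M.map (QuotientGroup.mk' N)).comap (QuotientGroup.mk' N) ≤ K := by
        rw [hcm]; exact sup_le hMK hNK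
      calc (M.map (QuotientGroup.mk' N)).comap (QuotientGroup.mk' N) ⊓ L
          ≤ K ⊓ L := inf_le_inf_right L hle
        _ = M := hM.symm
    · have hmap : M.map (QuotientGroup.mk' N) =
          L.map (QuotientGroup.mk' N) ⊓ K.map (QuotientGroup.mk' N) := by
        rw [hM, map_inf_of_le N hNK, inf_comm]
      rw [hmap]
      exact Q.restrict hQrel (Subgroup.map_mono hLH)
  · rintro ⟨hML, hMeq, hQrel⟩
    exact ⟨(M.map (QuotientGroup.mk' N)).comap (QuotientGroup.mk' N),
      (L.map (QuotientGroup.mk' N)).comap (QuotientGroup.mk' N),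
      ker_le_comap N _, Subgroup.comap_mono (Subgroup.map_mono hML), (Subgroup.le_comap_map (QuotientGroup.mk' N) L), hMeq,
      by rw [map_comap_self N, map_comap_self N]; exact hQrel⟩

/-- The inflation, packaged as a transfer system. -/
def inflate (Q : TransferSystem (G ⧸ N)) : TransferSystem G where
  rel := infRel N Q
  refl H := (infRel_iff N Q H H).mpr
    ⟨le_rfl, (inf_eq_right.mpr (Subgroup.le_comap_map (QuotientGroup.mk' N) H)).symm, Q.refl _⟩
  trans := by
    intro M L P h1 h2
    rw [infRel_iff] at *
    obtain ⟨hML, hMeq, hQ1⟩ := h1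
    obtain ⟨hLP, hLeq, hQ2⟩ := h2
    refine ⟨hML.trans hLP, ?_, Q.trans hQ1 hQ2⟩
    have hle : (M.map (QuotientGroup.mk' N)).comap (QuotientGroup.mk' N) ≤
        (L.map (QuotientGroup.mk' N)).comap (QuotientGroup.mk' N) :=
      Subgroup.comap_mono (Subgroup.map_mono hML)
    calc M = (M.map (QuotientGroup.mk' N)).comap (QuotientGroup.mk' N) ⊓ L := hMeq
      _ = (M.map (QuotientGroup.mk' N)).comap (QuotientGroup.mk' N) ⊓
          ((L.map (QuotientGroup.mk' N)).comap (QuotientGroup.mk' N) ⊓ P) := by rw [← hLeq]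
      _ = (M.map (QuotientGroup.mk' N)).comap (QuotientGroup.mk' N) ⊓ P := by
          rw [← inf_assoc, inf_eq_left.mpr hle]
  le_of_rel := by
    rintro M L ⟨K, H, _, _, _, hM, _⟩
    exact hM ▸ inf_le_right
  restrict := by
    rintro M L P ⟨K, H, hNK, hKH, hLH, hM, hQrel⟩ hPL
    refine ⟨K ⊓ (P.map (QuotientGroup.mk' N)).comap (QuotientGroup.mk' N),
      (P.map (QuotientGroup.mk' N)).comap (QuotientGroup.mk' N),
      le_inf hNK (ker_le_comap N _), inf_le_right, (Subgroup.le_comap_map (QuotientGroup.mk' N) P), ?_, ?_⟩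
    · calc P ⊓ M = P ⊓ (K ⊓ L) := by rw [hM]
        _ = K ⊓ L ⊓ P := by rw [inf_comm]
        _ = K ⊓ P := by rw [inf_assoc, inf_comm L P, inf_eq_left.mpr hPL]
        _ = K ⊓ ((P.map (QuotientGroup.mk' N)).comap (QuotientGroup.mk' N) ⊓ P) := by
            rw [inf_eq_right.mpr (Subgroup.le_comap_map (QuotientGroup.mk' N) P)]
        _ = K ⊓ (P.map (QuotientGroup.mk' N)).comap (QuotientGroup.mk' N) ⊓ P := by
            rw [inf_assoc]
    · rw [map_inf_of_le N hNK, map_comap_self N]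
      have hPH : P.map (QuotientGroup.mk' N) ≤ H.map (QuotientGroup.mk' N) :=
        Subgroup.map_mono (hPL.trans hLH)
      have := Q.restrict hQrel hPH
      rwa [inf_comm] at this
  conj := by
    rintro M L g ⟨K, H, hNK, hKH, hLH, hM, hQrel⟩
    refine ⟨K.map (MulAut.conj g).toMonoidHom, H.map (MulAut.conj g).toMonoidHom,
      ?_, Subgroup.map_mono hKH, Subgroup.map_mono hLH, ?_, ?_⟩
    · rw [← map_conj_self N g]; exact Subgroup.map_mono hNK
    · rw [hM]
      exact Subgroup.map_inf K L _ (MulAut.conj g).injective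
    · rw [map_conj_map, map_conj_map]
      exact Q.conj _ hQrel

theorem inflate_isDiscLike (Q : TransferSystem (G ⧸ N)) (hQ : Q.IsDiscLike) : (inflate N Q).IsDiscLike := by
  intro O' hO' M L hML
  obtain ⟨K, H, hNK, hKH, hLH, hM, hQrel⟩ := hML
  let Q' : TransferSystem (G ⧸ N) :=
    { rel := fun A B => O'.rel (A.comap (QuotientGroup.mk' N)) (B.comap (QuotientGroup.mk' N))
      refl := fun A => O'.refl _
      trans := fun h1 h2 => O'.trans h1 h2
      le_of_rel := by
        intro A B h
        have h2 := Subgroup.map_mono (f := QuotientGroup.mk' N) (O'.le_of_rel h)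
        rwa [map_comap_self N, map_comap_self N] at h2
      restrict := by
        intro A B C h hC
        have := O'.restrict h (Subgroup.comap_mono hC)
        rwa [← Subgroup.comap_inf] at this
      conj := by
        intro A B gbar h
        obtain ⟨g, rfl⟩ := QuotientGroup.mk'_surjective N gbar
        rw [comap_conj, comap_conj]
        exact O'.conj g h }
  have key : ∀ A : Subgroup (G ⧸ N), Q.rel A ⊤ → Q'.rel A ⊤ := by
    intro A hA
    show O'.rel (A.comap (QuotientGroup.mk' N)) ((⊤ : Subgroup (G ⧸ N)).comap (QuotientGroup.mk' N))
    rw [Subgroup.comap_top]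
    refine hO' _ ⟨A.comap (QuotientGroup.mk' N), ⊤, ker_le_comap N A, le_top, le_top, (inf_top_eq _).symm, ?_⟩
    rw [map_comap_self N, Subgroup.map_top_of_surjective _ (QuotientGroup.mk'_surjective N)]
    exact hA
  have hKHrel : O'.rel K H := by
    have h2 : O'.rel ((K.map (QuotientGroup.mk' N)).comap (QuotientGroup.mk' N))
        ((H.map (QuotientGroup.mk' N)).comap (QuotientGroup.mk' N)) :=
      hQ Q' key (K.map (QuotientGroup.mk' N)) (H.map (QuotientGroup.mk' N)) hQrel
    rwa [comap_map_self N hNK, comap_map_self N (hNK.trans hKH)] at h2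
  rw [hM, inf_comm]
  exact O'.restrict hKHrel hLH

end Stmt16Aux

/-- The inflation of a disc-like `(G/N)`-transfer system is a disc-like
`G`-transfer system. -/
theorem stmt16 {G : Type*} [Group G] [Finite G] (N : Subgroup G) [N.Normal]
    (Q : TransferSystem (G ⧸ N)) (hQ : Q.IsDiscLike) :
    ∃ T : TransferSystem G,
      (∀ M L : Subgroup G, T.rel M L ↔ infRel N Q M L) ∧
      T.IsDiscLike := ⟨Stmt16Aux.inflate N Q, fun _ _ => Iff.rfl, Stmt16Aux.inflate_isDiscLike N Q hQ⟩
end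

section
/- Let G be a finite abelian group, H a subgroup of G, and P a disc-like H-transfer system. Then the coinduction coind^G_H P is a disc-like G-transfer system. -/
/-- In a commutative group, conjugation acts trivially on subgroups. -/
lemma conjMap_eq {M : Type*} [CommGroup M] (g : M) (K : Subgroup M) :
    K.map (MulAut.conj g).toMonoidHom = K := by
  have h : (MulAut.conj g).toMonoidHom = MonoidHom.id M := by
    ext x
    simp [mul_comm]
  rw [h, Subgroup.map_id]

lemma subgroupOf_inf_right {G : Type*} [Group G] (L H : Subgroup G) :
    (L ⊓ H).subgroupOf H = L.subgroupOf H := by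
  unfold Subgroup.subgroupOf
  rw [Subgroup.comap_inf]
  have : H.subgroupOf H = ⊤ := Subgroup.subgroupOf_self H
  unfold Subgroup.subgroupOf at this
  rw [this, inf_top_eq]

/-- For abelian `G`, the coinduction of a disc-like `H`-transfer system is
a disc-like `G`-transfer system. -/
theorem stmt17 {G : Type*} [CommGroup G] [Finite G] (H : Subgroup G)
    (P : TransferSystem ↥H) (hP : P.IsDiscLike) :
    ∃ T : TransferSystem G,
      (∀ L K : Subgroup G, T.rel L K ↔
        (L ≤ K ∧ P.rel (L.subgroupOf H) (K.subgroupOf H))) ∧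
      T.IsDiscLike := by
  classical
  -- the coinduced transfer system
  refine ⟨{ rel := fun L K => L ≤ K ∧ P.rel (L.subgroupOf H) (K.subgroupOf H)
            refl := fun L => ⟨le_rfl, P.refl _⟩
            trans := fun h1 h2 => ⟨h1.1.trans h2.1, P.trans h1.2 h2.2⟩
            le_of_rel := fun h => h.1
            restrict := ?_
            conj := ?_ }, fun L K => Iff.rfl, ?_⟩
  · -- restriction
    intro L' H' K' h hK
    refine ⟨inf_le_left, ?_⟩
    have heq : (K' ⊓ L').subgroupOf H = K'.subgroupOf H ⊓ L'.subgroupOf H := by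
      unfold Subgroup.subgroupOf
      rw [Subgroup.comap_inf]
    rw [heq]
    exact P.restrict h.2 (fun x hx => hK hx)
  · -- conjugation
    intro K' H' g h
    rw [conjMap_eq, conjMap_eq]
    exact h
  · -- disc-likeness
    intro T' hT' L K hLK
    obtain ⟨hle, hp⟩ := hLK
    -- transfers to the top with source containing H
    have hTtop : ∀ M : Subgroup G, H ≤ M → T'.rel M ⊤ := by
      intro M hM
      refine hT' M ⟨le_top, ?_⟩
      rw [Subgroup.top_subgroupOf, Subgroup.subgroupOf_eq_top.2 hM]
      exact P.refl ⊤
    -- (★): for L ≤ K we always have  L ⊔ (K ⊓ H) → K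
    have hstar : ∀ L K : Subgroup G, L ≤ K → T'.rel (L ⊔ K ⊓ H) K := by
      intro L K hLK
      have h1 : T'.rel (L ⊔ H) ⊤ := hTtop _ le_sup_right
      have h2 := T'.restrict h1 (le_top : K ≤ ⊤)
      have h3 : K ⊓ (L ⊔ H) = L ⊔ K ⊓ H := by
        rw [inf_comm, sup_inf_assoc_of_le H hLK, inf_comm]
      rwa [h3] at h2
    have hφle : ∀ A : Subgroup ↥H, A.map H.subtype ≤ H := by
      intro A x hx
      obtain ⟨y, _, rfl⟩ := hx
      exact y.2
    -- the pulled-back transfer system on H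
    set P'' : TransferSystem ↥H :=
      { rel := fun A B => A ≤ B ∧ ∀ L : Subgroup G, L ⊓ H = A.map H.subtype →
          T'.rel L (L ⊔ B.map H.subtype)
        refl := by
          intro A
          refine ⟨le_rfl, fun L hL => ?_⟩
          have : A.map H.subtype ≤ L := hL ▸ inf_le_left
          rw [sup_eq_left.2 this]
          exact T'.refl L
        trans := by
          intro A B C h1 h2
          refine ⟨h1.1.trans h2.1, fun L hL => ?_⟩
          have hAB := h1.2 L hL
          have key : (L ⊔ B.map H.subtype) ⊓ H = B.map H.subtype := by
            rw [sup_comm, sup_inf_assoc_of_le L (hφle B), hL,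
              sup_eq_left.2 (Subgroup.map_mono h1.1)]
          have hBC := h2.2 (L ⊔ B.map H.subtype) key
          have heq : L ⊔ B.map H.subtype ⊔ C.map H.subtype = L ⊔ C.map H.subtype := by
            rw [sup_assoc, sup_eq_right.2 (Subgroup.map_mono h2.1)]
          rw [heq] at hBC
          exact T'.trans hAB hBC
        le_of_rel := fun h => h.1
        restrict := by
          intro A B C h hC
          refine ⟨inf_le_left, fun L hL => ?_⟩
          have hkey : (L ⊔ A.map H.subtype) ⊓ H = A.map H.subtype := by
            rw [sup_comm, sup_inf_assoc_of_le L (hφle A), hL]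
            exact sup_eq_left.2 (Subgroup.map_mono inf_le_right)
          have h1 := h.2 (L ⊔ A.map H.subtype) hkey
          have h2 := T'.restrict h1
            (sup_le (le_sup_of_le_left le_sup_left)
              (le_sup_of_le_right (Subgroup.map_mono hC)) :
                L ⊔ C.map H.subtype ≤ L ⊔ A.map H.subtype ⊔ B.map H.subtype)
          have claim : (L ⊔ C.map H.subtype) ⊓ (L ⊔ A.map H.subtype) = L := by
            have hCH : (L ⊔ C.map H.subtype) ⊓ H = C.map H.subtype := by
              rw [sup_comm, sup_inf_assoc_of_le L (hφle C), hL]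
              exact sup_eq_left.2 (Subgroup.map_mono inf_le_left)
            have hAmod : A.map H.subtype ⊓ (L ⊔ C.map H.subtype) ≤ L := by
              have e : A.map H.subtype ⊓ (L ⊔ C.map H.subtype)
                  = A.map H.subtype ⊓ ((L ⊔ C.map H.subtype) ⊓ H) := by
                rw [inf_comm (L ⊔ C.map H.subtype) H, ← inf_assoc,
                  inf_eq_left.2 (hφle A)]
              rw [e, hCH, inf_comm, ← Subgroup.map_inf _ _ _ H.subtype_injective, ← hL]
              exact inf_le_left
            have e1 : (L ⊔ C.map H.subtype) ⊓ (L ⊔ A.map H.subtype)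
                = L ⊔ A.map H.subtype ⊓ (L ⊔ C.map H.subtype) := by
              rw [inf_comm]
              exact sup_inf_assoc_of_le _ le_sup_left
            rw [e1]
            exact sup_eq_left.2 hAmod
          rwa [claim] at h2
        conj := by
          intro A B g h
          rw [conjMap_eq, conjMap_eq]
          exact h }
    -- generators of P land in P''
    have hgen : ∀ A : Subgroup ↥H, P.rel A ⊤ → P''.rel A ⊤ := by
      intro A hA
      refine ⟨le_top, fun L hL => ?_⟩
      have hφtop : (⊤ : Subgroup ↥H).map H.subtype = H := by
        rw [← MonoidHom.range_eq_map, Subgroup.range_subtype]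
      have hsub : L.subgroupOf H = A := by
        rw [← subgroupOf_inf_right L H, hL]
        exact Subgroup.comap_map_eq_self_of_injective H.subtype_injective A
      have h1 : T'.rel L ⊤ := by
        refine hT' L ⟨le_top, ?_⟩
        rw [hsub, Subgroup.top_subgroupOf]
        exact hA
      have h2 := T'.restrict h1 (le_top : L ⊔ H ≤ ⊤)
      rw [inf_eq_right.2 (le_sup_left : L ≤ L ⊔ H)] at h2
      rwa [hφtop]
    -- conclude using disc-likeness of P
    obtain ⟨-, hmain⟩ := hP P'' hgen (L.subgroupOf H) (K.subgroupOf H) hp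
    have step2 := hmain L (Subgroup.subgroupOf_map_subtype L H).symm
    rw [Subgroup.subgroupOf_map_subtype K H] at step2
    exact T'.trans step2 (hstar L K hle)
end

section
/- Let G be a finite group, H a subgroup of G, and P an H-transfer system. Define ind^G_H P to be the reflexive-transitive closure of the binary relation {(gLg⁻¹, gKg⁻¹) : g ∈ G, L ≤ K ≤ H, L →_P K} on subgroups of G. Then ind^G_H P is a G-transfer system, and for every G-transfer system O one has ind^G_H P ≤ O if and only if P ≤ res^G_H O; that is, induction is left adjoint to restriction. -/
section AuxStmt18

variable {G : Type*} [Group G]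

lemma conj_map_conj_inv (g : G) (X : Subgroup G) :
    ((X.map (MulAut.conj g).toMonoidHom).map (MulAut.conj g⁻¹).toMonoidHom) = X := by
  rw [Subgroup.map_map]
  convert Subgroup.map_id X using 2
  ext x
  simp
  group

lemma map_comap_subtype (H : Subgroup G) (X : Subgroup G) (hX : X ≤ H) :
    (X.comap H.subtype).map H.subtype = X := by
  rw [Subgroup.map_comap_eq, Subgroup.range_subtype, inf_eq_right.mpr hX]

variable (H : Subgroup G) (P : TransferSystem ↥H)

/-- base relation -/
def stmt18S : Subgroup G → Subgroup G → Prop :=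
  fun A' B' => ∃ (g : G) (L K : Subgroup ↥H), P.rel L K ∧
    A' = (L.map H.subtype).map (MulAut.conj g).toMonoidHom ∧
    B' = (K.map H.subtype).map (MulAut.conj g).toMonoidHom

variable {H P}

lemma stmt18S_le {A B : Subgroup G} (h : stmt18S H P A B) : A ≤ B := by
  obtain ⟨g, L, K, hLK, rfl, rfl⟩ := h
  exact Subgroup.map_mono (Subgroup.map_mono (P.le_of_rel hLK))

lemma stmt18S_conj {A B : Subgroup G} (x : G) (h : stmt18S H P A B) :
    stmt18S H P (A.map (MulAut.conj x).toMonoidHom) (B.map (MulAut.conj x).toMonoidHom) := by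
  obtain ⟨g, L, K, hLK, rfl, rfl⟩ := h
  have hcomp : ((MulAut.conj x).toMonoidHom : G →* G).comp (MulAut.conj g).toMonoidHom
      = (MulAut.conj (x * g)).toMonoidHom := by
    ext y; simp [mul_assoc]
  refine ⟨x * g, L, K, hLK, ?_, ?_⟩ <;>
  · rw [Subgroup.map_map, Subgroup.map_map, hcomp, Subgroup.map_map]

lemma stmt18S_restrict {A B C : Subgroup G} (h : stmt18S H P A B) (hC : C ≤ B) :
    stmt18S H P (C ⊓ A) C := by
  obtain ⟨g, L, K, hLK, rfl, rfl⟩ := h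
  -- let C' := conj g⁻¹ C, a subgroup contained in K.map subtype ≤ H
  set C' : Subgroup G := C.map (MulAut.conj g⁻¹).toMonoidHom with hC'
  have hC'le : C' ≤ K.map H.subtype := by
    have := Subgroup.map_mono (f := (MulAut.conj g⁻¹).toMonoidHom) hC
    rwa [conj_map_conj_inv] at this
  have hC'H : C' ≤ H := hC'le.trans (by simpa using Subgroup.map_subtype_le K)
  set D : Subgroup ↥H := C'.comap H.subtype with hD
  have hDmap : D.map H.subtype = C' := map_comap_subtype H C' hC'H
  have hDK : D ≤ K := by
    intro x hx
    have : H.subtype x ∈ K.map H.subtype := hC'le hx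
    rcases this with ⟨y, hy, hxy⟩
    have : y = x := Subtype.ext hxy
    rwa [← this]
  have hrel : P.rel (D ⊓ L) D := P.restrict hLK hDK
  refine ⟨g, D ⊓ L, D, hrel, ?_, ?_⟩
  · rw [Subgroup.map_inf _ _ _ H.subtype_injective,
      Subgroup.map_inf _ _ _ (MulAut.conj g).injective, hDmap]
    have : C'.map (MulAut.conj g).toMonoidHom = C := by
      rw [hC']
      have := conj_map_conj_inv g⁻¹ C
      rwa [inv_inv] at this
    rw [this, inf_comm]
  · rw [hDmap, hC']
    have := conj_map_conj_inv g⁻¹ C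
    rwa [inv_inv, eq_comm] at this

lemma stmt18_rtg_le {A B : Subgroup G} (h : Relation.ReflTransGen (stmt18S H P) A B) : A ≤ B := by
  induction h with
  | refl => exact le_rfl
  | tail _ hstep ih => exact ih.trans (stmt18S_le hstep)

lemma stmt18_rtg_restrict {A B C : Subgroup G}
    (h : Relation.ReflTransGen (stmt18S H P) A B) (hC : C ≤ B) :
    Relation.ReflTransGen (stmt18S H P) (C ⊓ A) C := by
  induction h generalizing C with
  | refl => rw [inf_eq_left.mpr hC]
  | @tail M B hAM hstep ih =>
    have h1 : stmt18S H P (C ⊓ M) C := stmt18S_restrict hstep hC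
    have h2 := ih (C := C ⊓ M) inf_le_right
    have : C ⊓ M ⊓ A = C ⊓ A := by
      rw [inf_assoc, inf_eq_right.mpr (stmt18_rtg_le hAM)]
    rw [this] at h2
    exact h2.tail h1

end AuxStmt18

/-- The induction `ind^G_H P`, the reflexive-transitive closure of
`{(gLg⁻¹, gKg⁻¹) : g ∈ G, L →_P K}`, is a `G`-transfer system, and it is left adjoint
to restriction: `ind^G_H P ≤ O` iff `P ≤ res^G_H O`. -/
theorem stmt18 {G : Type*} [Group G] [Finite G] (H : Subgroup G) (P : TransferSystem ↥H) :
    ∃ T : TransferSystem G,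
      (∀ A B : Subgroup G, T.rel A B ↔ Relation.ReflTransGen
        (fun A' B' : Subgroup G => ∃ (g : G) (L K : Subgroup ↥H), P.rel L K ∧
          A' = (L.map H.subtype).map (MulAut.conj g).toMonoidHom ∧
          B' = (K.map H.subtype).map (MulAut.conj g).toMonoidHom) A B) ∧
      (∀ O : TransferSystem G,
        (∀ A B : Subgroup G, T.rel A B → O.rel A B) ↔
        (∀ L K : Subgroup ↥H, P.rel L K → O.rel (L.map H.subtype) (K.map H.subtype))) := by
  refine ⟨{ rel := Relation.ReflTransGen (stmt18S H P)
            refl := fun A => Relation.ReflTransGen.refl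
            trans := fun h1 h2 => h1.trans h2
            le_of_rel := fun h => stmt18_rtg_le h
            restrict := fun {L B K} h hK => stmt18_rtg_restrict h hK
            conj := fun g h => ?_ }, fun A B => Iff.rfl, fun O => ⟨fun hO L K hLK => ?_, fun hO A B hAB => ?_⟩⟩
  · induction h with
    | refl => exact Relation.ReflTransGen.refl
    | tail _ hstep ih => exact ih.tail (stmt18S_conj g hstep)
  · have hone : ((MulAut.conj (1 : G)).toMonoidHom : G →* G) = MonoidHom.id G := by
      ext y; simp
    refine hO _ _ (Relation.ReflTransGen.single ⟨1, L, K, hLK, ?_, ?_⟩) <;>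
    · rw [hone, Subgroup.map_id]
  · induction hAB with
    | refl => exact O.refl _
    | tail _ hstep ih =>
      obtain ⟨g, L, K, hLK, rfl, rfl⟩ := hstep
      exact O.trans ih (O.conj g (hO L K hLK))
end

section
/- Let G be a finite group, N a normal subgroup of G, and Q a (G/N)-transfer system. Then the inflation inf^G_{G/N} Q, i.e., the relation on subgroups of G given by M →_{inf Q} L iff there exist subgroups K, H of G with N ≤ K ≤ H, L ≤ H, M = K ∩ L, and K/N →_Q H/N, is a G-transfer system. -/
section AuxInf

variable {G : Type*} [Group G] (N : Subgroup G) [N.Normal]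

private lemma aux_mk_eq {x y : G} (h : (QuotientGroup.mk' N) x = (QuotientGroup.mk' N) y) :
    x⁻¹ * y ∈ N := by
  have : (x : G ⧸ N) = (y : G ⧸ N) := h
  rwa [QuotientGroup.eq] at this

/-- If `N ≤ K` then images in `G/N` satisfy `map K ⊓ map L = map (K ⊓ L)`. -/
private lemma aux_map_inf_left {K L : Subgroup G} (hNK : N ≤ K) :
    K.map (QuotientGroup.mk' N) ⊓ L.map (QuotientGroup.mk' N)
      = (K ⊓ L).map (QuotientGroup.mk' N) := by
  refine le_antisymm ?_ (le_inf (Subgroup.map_mono inf_le_left) (Subgroup.map_mono inf_le_right))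
  rintro q ⟨hqK, hqL⟩
  obtain ⟨k, hk, rfl⟩ := hqK
  obtain ⟨l, hl, hlq⟩ := hqL
  have hn : l⁻¹ * k ∈ N := aux_mk_eq N hlq
  have hlK : l ∈ K := by
    have : k * (l⁻¹ * k)⁻¹ ∈ K := K.mul_mem hk (K.inv_mem (hNK hn))
    simpa [mul_assoc] using this
  exact ⟨l, ⟨hlK, hl⟩, hlq⟩

/-- Under `K ≤ H`, `L ≤ H`, `L ⊓ N = H ⊓ N`, images satisfy `map K ⊓ map L = map (K ⊓ L)`. -/
private lemma aux_map_inf_restrict {K L H : Subgroup G} (hKH : K ≤ H) (hLH : L ≤ H)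
    (hLN : L ⊓ N = H ⊓ N) :
    K.map (QuotientGroup.mk' N) ⊓ L.map (QuotientGroup.mk' N)
      = (K ⊓ L).map (QuotientGroup.mk' N) := by
  refine le_antisymm ?_ (le_inf (Subgroup.map_mono inf_le_left) (Subgroup.map_mono inf_le_right))
  rintro q ⟨hqK, hqL⟩
  obtain ⟨k, hk, rfl⟩ := hqK
  obtain ⟨l, hl, hlq⟩ := hqL
  have hn : l⁻¹ * k ∈ N := aux_mk_eq N hlq
  have hH : l⁻¹ * k ∈ H := H.mul_mem (H.inv_mem (hLH hl)) (hKH hk)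
  have hL : l⁻¹ * k ∈ L := by
    have : l⁻¹ * k ∈ L ⊓ N := hLN ▸ ⟨hH, hn⟩
    exact this.1
  have hkL : k ∈ L := by
    have : l * (l⁻¹ * k) ∈ L := L.mul_mem hl hL
    simpa [mul_assoc] using this
  exact ⟨k, ⟨hk, hkL⟩, rfl⟩

/-- If `M ≤ L` and `L ⊓ N ≤ M` then `(M ⊔ N) ⊓ L = M`. -/
private lemma aux_sup_inf {M L : Subgroup G} (hML : M ≤ L) (hLN : L ⊓ N ≤ M) :
    (M ⊔ N) ⊓ L = M := by
  refine le_antisymm ?_ (le_inf le_sup_left hML)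
  rintro x ⟨hxMN, hxL⟩
  have : x ∈ Subgroup.comap (QuotientGroup.mk' N) ((M ⊔ N).map (QuotientGroup.mk' N)) :=
    Subgroup.le_comap_map _ _ hxMN
  rw [Subgroup.map_sup] at this
  have hNbot : N.map (QuotientGroup.mk' N) = ⊥ := by
    rw [Subgroup.map_eq_bot_iff, QuotientGroup.ker_mk']
  rw [hNbot, sup_bot_eq] at this
  obtain ⟨m, hm, hmx⟩ := this
  have hn : m⁻¹ * x ∈ N := aux_mk_eq N hmx
  have hnM : m⁻¹ * x ∈ M := hLN ⟨L.mul_mem (L.inv_mem (hML hm)) hxL, hn⟩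
  have : m * (m⁻¹ * x) ∈ M := M.mul_mem hm hnM
  simpa [mul_assoc] using this

/-- The image of `M ⊔ N` in `G/N` equals the image of `M`. -/
private lemma aux_map_sup (M : Subgroup G) :
    (M ⊔ N).map (QuotientGroup.mk' N) = M.map (QuotientGroup.mk' N) := by
  rw [Subgroup.map_sup]
  have hNbot : N.map (QuotientGroup.mk' N) = ⊥ := by
    rw [Subgroup.map_eq_bot_iff, QuotientGroup.ker_mk']
  rw [hNbot, sup_bot_eq]

/-- A normal subgroup is fixed by conjugation. -/
private lemma aux_conj_normal (g : G) :
    N.map (MulAut.conj g).toMonoidHom = N := by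
  ext x
  constructor
  · rintro ⟨n, hn, rfl⟩
    exact Subgroup.Normal.conj_mem ‹N.Normal› n hn g
  · intro hx
    refine ⟨g⁻¹ * x * g, ?_, by simp [mul_assoc]⟩
    simpa using Subgroup.Normal.conj_mem ‹N.Normal› x hx g⁻¹

/-- Conjugation commutes with passing to the quotient. -/
private lemma aux_conj_map (g : G) (M : Subgroup G) :
    (M.map (MulAut.conj g).toMonoidHom).map (QuotientGroup.mk' N)
      = (M.map (QuotientGroup.mk' N)).map
          (MulAut.conj ((g : G) : G ⧸ N)).toMonoidHom := by
  rw [Subgroup.map_map, Subgroup.map_map]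
  congr 1

end AuxInf


/-- The inflation `inf^G_{G/N} Q` of a `(G/N)`-transfer system `Q` is a
`G`-transfer system. -/
theorem stmt19 {G : Type*} [Group G] [Finite G] (N : Subgroup G) [N.Normal]
    (Q : TransferSystem (G ⧸ N)) :
    ∃ T : TransferSystem G, ∀ M L : Subgroup G, T.rel M L ↔ infRel N Q M L :=  by
  classical
  set f := QuotientGroup.mk' N with hf
  -- the auxiliary characterization of the inflated relation
  let rel' : Subgroup G → Subgroup G → Prop :=
    fun M L => M ≤ L ∧ M ⊓ N = L ⊓ N ∧ Q.rel (M.map f) (L.map f)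
  have hiff : ∀ M L : Subgroup G, rel' M L ↔ infRel N Q M L := by
    intro M L
    constructor
    · rintro ⟨hML, hMN, hQ⟩
      refine ⟨M ⊔ N, L ⊔ N, le_sup_right, sup_le_sup_right hML N, le_sup_left, ?_, ?_⟩
      · exact (aux_sup_inf N hML (by rw [← hMN]; exact inf_le_left)).symm
      · rwa [aux_map_sup, aux_map_sup]
    · rintro ⟨K, H, hNK, hKH, hLH, rfl, hQ⟩
      refine ⟨inf_le_right, ?_, ?_⟩
      · rw [inf_assoc]
        exact inf_of_le_right (le_trans inf_le_right hNK)
      · have h1 := Q.restrict hQ (Subgroup.map_mono hLH)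
        rwa [inf_comm (L.map f) (K.map f), aux_map_inf_left N hNK] at h1
  refine ⟨⟨rel', ?_, ?_, ?_, ?_, ?_⟩, hiff⟩
  · intro H; exact ⟨le_rfl, rfl, Q.refl _⟩
  · rintro K L H ⟨h1, h2, h3⟩ ⟨h4, h5, h6⟩
    exact ⟨h1.trans h4, h2.trans h5, Q.trans h3 h6⟩
  · rintro K H ⟨h1, _, _⟩; exact h1
  · rintro L H K ⟨h1, h2, h3⟩ hK
    refine ⟨inf_le_left, ?_, ?_⟩
    · rw [inf_assoc, h2, ← inf_assoc, inf_of_le_left hK]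
    · have h4 := Q.restrict h3 (Subgroup.map_mono hK)
      rwa [aux_map_inf_restrict N hK h1 h2] at h4
  · rintro K H g ⟨h1, h2, h3⟩
    refine ⟨Subgroup.map_mono h1, ?_, ?_⟩
    · have hinj : Function.Injective ⇑(MulAut.conj g).toMonoidHom :=
        (MulAut.conj g).injective
      rw [← aux_conj_normal N g, ← Subgroup.map_inf _ _ _ hinj,
        ← Subgroup.map_inf _ _ _ hinj, h2]
    · have h4 := Q.conj ((g : G) : G ⧸ N) h3
      rwa [← aux_conj_map, ← aux_conj_map] at h4
end
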